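/- arXiv:2102.08859 — 4 statements merged into one kernel-verified Lean document; each statement's English description precedes it below -/
import Mathlib

section
/- With the notation of the context, assume n is even and r is odd. Then Y_0 + Y_{Q,n} = { y ∈ Y : n_{(r)} divides y_0 }; consequently the quotient group Y/(Y_0 + Y_{Q,n}) is cyclic of order n_{(r)}, generated by the class of e_0. -/
/-! Testing against the basis, `y ∈ Y_{Q,n}` means `n ∣ y_0 - 2 y_i` for every `i` and
`n ∣ ∑ y_i`; summing the first conditions and adding twice the last gives `n ∣ r y_0`.
Conversely, if `n ∣ r t` and `r = 2q + 1`, the vector with all `y_i = (q + 1) t` and `y_0 = t`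
lies in `Y_{Q,n}`. As `Y_0` is the kernel of `y ↦ y_0`, this shows
`Y_0 + Y_{Q,n} = {y : n ∣ r y_0} = {y : n_{(r)} ∣ y_0}`, and `y ↦ y_0 mod n_{(r)}` identifies
the quotient with `ℤ/n_{(r)}`. -/

/-- The symmetric bilinear form on `Y = ℤ^{r+1}` (realized as `(Fin r → ℤ) × ℤ` with basis
`e_1, …, e_r` the standard vectors of the first factor and `e_0 = (0,1)`) attached to the
`n`-fold cover of `GSp_{2r}` of similitudes-splitting type:
`B(e_i, e_i) = -2`, `B(e_i, e_j) = 0` for `i ≠ j`, `B(e_i, e_0) = 1`, `B(e_0, e_0) = 0`. -/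
def GSpB (r : ℕ) (x y : (Fin r → ℤ) × ℤ) : ℤ :=
  -2 * (∑ i, x.1 i * y.1 i) + (∑ i, x.1 i) * y.2 + x.2 * (∑ i, y.1 i)

lemma GSpB_add_left (r : ℕ) (a b y : (Fin r → ℤ) × ℤ) :
    GSpB r (a + b) y = GSpB r a y + GSpB r b y := by
  simp only [GSpB, Prod.fst_add, Prod.snd_add, Pi.add_apply, add_mul,
    Finset.sum_add_distrib]
  ring

lemma GSpB_neg_left (r : ℕ) (a y : (Fin r → ℤ) × ℤ) :
    GSpB r (-a) y = -GSpB r a y := by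
  simp only [GSpB, Prod.fst_neg, Prod.snd_neg, Pi.neg_apply, neg_mul,
    Finset.sum_neg_distrib]
  ring

/-- The lattice `Y_{Q,n} = {y ∈ Y : B(y, y') ∈ nℤ for all y' ∈ Y}`. -/
def YQn (r n : ℕ) : AddSubgroup ((Fin r → ℤ) × ℤ) where
  carrier := {y | ∀ y', (n : ℤ) ∣ GSpB r y y'}
  zero_mem' := by
    intro y'
    simp [GSpB]
  add_mem' := by
    intro a b ha hb y'
    rw [GSpB_add_left]
    exact dvd_add (ha y') (hb y')
  neg_mem' := by
    intro a ha y'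
    rw [GSpB_neg_left]
    exact dvd_neg.mpr (ha y')

/-- The lattice `Y_0 = ℤe_1 ⊕ ⋯ ⊕ ℤe_r` (the cocharacter lattice of `Sp_{2r}`). -/
def Y0 (r : ℕ) : AddSubgroup ((Fin r → ℤ) × ℤ) where
  carrier := {y | y.2 = 0}
  zero_mem' := rfl
  add_mem' := by
    intro a b ha hb
    have ha' : a.2 = 0 := ha
    have hb' : b.2 = 0 := hb
    show (a + b).2 = 0
    simp [Prod.snd_add, ha', hb']
  neg_mem' := by
    intro a ha
    have ha' : a.2 = 0 := ha
    show (-a).2 = 0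
    simp [Prod.snd_neg, ha']

/-- The lattice `Y_{0,Q,n} = {y ∈ Y_0 : B(y, y') ∈ nℤ for all y' ∈ Y_0}`. -/
def Y0Qn (r n : ℕ) : AddSubgroup ((Fin r → ℤ) × ℤ) where
  carrier := {y | y.2 = 0 ∧ ∀ y' : (Fin r → ℤ) × ℤ, y'.2 = 0 → (n : ℤ) ∣ GSpB r y y'}
  zero_mem' := ⟨rfl, fun y' _ => by simp [GSpB]⟩
  add_mem' := by
    rintro a b ⟨ha2, ha⟩ ⟨hb2, hb⟩
    refine ⟨?_, fun y' hy' => ?_⟩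
    · simp only [Prod.snd_add, ha2, hb2, add_zero]
    · rw [GSpB_add_left]
      exact dvd_add (ha y' hy') (hb y' hy')
  neg_mem' := by
    rintro a ⟨ha2, ha⟩
    refine ⟨?_, fun y' hy' => ?_⟩
    · simp only [Prod.snd_neg, ha2, neg_zero]
    · rw [GSpB_neg_left]
      exact dvd_neg.mpr (ha y' hy')

theorem Int.natCast_dvd_mul_iff_div_gcd_dvd {a b : ℕ} (hb : b ≠ 0) (c : ℤ) :
    (a : ℤ) ∣ b * c ↔ ((a / a.gcd b : ℕ) : ℤ) ∣ c := by
  have hg : 0 < a.gcd b := Nat.gcd_pos_of_pos_right a (Nat.pos_of_ne_zero hb)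
  have hcop : IsCoprime ((a / a.gcd b : ℕ) : ℤ) ((b / a.gcd b : ℕ) : ℤ) :=
    Nat.isCoprime_iff_coprime.mpr (Nat.coprime_div_gcd_div_gcd hg)
  have ha : (a : ℤ) = a.gcd b * (a / a.gcd b : ℕ) := by
    exact_mod_cast (Nat.mul_div_cancel' (Nat.gcd_dvd_left a b)).symm
  have hb' : (b : ℤ) = a.gcd b * (b / a.gcd b : ℕ) := by
    exact_mod_cast (Nat.mul_div_cancel' (Nat.gcd_dvd_right a b)).symm
  rw [ha, hb', mul_assoc, mul_dvd_mul_iff_left (by exact_mod_cast hg.ne')]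
  exact ⟨hcop.dvd_of_dvd_mul_left, fun h => h.mul_left _⟩

theorem GSpB_eq_sum (r : ℕ) (x y : (Fin r → ℤ) × ℤ) :
    GSpB r x y = ∑ i, (x.2 - 2 * x.1 i) * y.1 i + (∑ i, x.1 i) * y.2 := by
  simp only [GSpB, sub_mul, Finset.sum_sub_distrib, ← Finset.mul_sum, mul_assoc]
  ring

theorem mem_YQn_iff {r n : ℕ} {y : (Fin r → ℤ) × ℤ} :
    y ∈ YQn r n ↔ (∀ i, (n : ℤ) ∣ y.2 - 2 * y.1 i) ∧ (n : ℤ) ∣ ∑ i, y.1 i := by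
  refine ⟨fun h => ⟨fun i => ?_, ?_⟩, fun ⟨hi, h0⟩ y' => ?_⟩
  · simpa [GSpB_eq_sum, Pi.single_apply] using h (Pi.single i 1, 0)
  · simpa [GSpB_eq_sum] using h (0, 1)
  · rw [GSpB_eq_sum]
    exact dvd_add (Finset.dvd_sum fun i _ => (hi i).mul_right _) (h0.mul_right _)

theorem dvd_mul_snd_of_mem_YQn {r n : ℕ} {y : (Fin r → ℤ) × ℤ} (hy : y ∈ YQn r n) :
    (n : ℤ) ∣ r * y.2 := by
  obtain ⟨hi, h0⟩ := mem_YQn_iff.mp hy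
  have key : (r : ℤ) * y.2 = ∑ i, (y.2 - 2 * y.1 i) + 2 * ∑ i, y.1 i := by
    simp [Finset.sum_sub_distrib, ← Finset.mul_sum]
  rw [key]
  exact dvd_add (Finset.dvd_sum fun i _ => hi i) (h0.mul_left 2)

-- With `r = 2q + 1`, the constant `c = (q + 1) t` solves `2c ≡ t` and `rc ≡ 0` modulo `n`.
theorem exists_mem_YQn_snd_eq {r n : ℕ} (hr : Odd r) {t : ℤ} (ht : (n : ℤ) ∣ r * t) :
    ∃ y ∈ YQn r n, y.2 = t := by
  obtain ⟨q, rfl⟩ := hr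
  refine ⟨(fun _ => (q + 1) * t, t), mem_YQn_iff.mpr ⟨fun _ => ?_, ?_⟩, rfl⟩
  · have : t - 2 * ((q + 1) * t) = -(((2 * q + 1 : ℕ) : ℤ) * t) := by push_cast; ring
    simpa [this] using ht
  · have : ∑ _ : Fin (2 * q + 1), ((q : ℤ) + 1) * t
        = (q + 1) * (((2 * q + 1 : ℕ) : ℤ) * t) := by
      simp only [Finset.sum_const, Finset.card_univ, Fintype.card_fin, Int.nsmul_eq_mul]
      ring
    rw [this]
    exact ht.mul_left _

theorem mem_Y0_sup_YQn_iff {r n : ℕ} (hr : Odd r) {y : (Fin r → ℤ) × ℤ} :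
    y ∈ Y0 r ⊔ YQn r n ↔ (n : ℤ) ∣ r * y.2 := by
  constructor
  · intro hy
    obtain ⟨a, ha, b, hb, rfl⟩ := AddSubgroup.mem_sup.mp hy
    have ha2 : a.2 = 0 := ha
    simpa [ha2] using dvd_mul_snd_of_mem_YQn hb
  · intro hy
    obtain ⟨z, hz, hz2⟩ := exists_mem_YQn_snd_eq hr hy
    have hyz : y - z ∈ Y0 r := show (y - z).2 = 0 by simp [hz2]
    simpa using AddSubgroup.add_mem_sup hyz hz

section QuotientBySnd

variable {M : Type*} [AddCommGroup M] {H : AddSubgroup (M × ℤ)} {d : ℕ}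

theorem AddSubgroup.eq_ker_of_mem_iff_dvd_snd (hH : ∀ y, y ∈ H ↔ (d : ℤ) ∣ y.2) :
    H = ((Int.castAddHom (ZMod d)).comp (AddMonoidHom.snd M ℤ)).ker := by
  ext y
  simp [hH, ZMod.intCast_zmod_eq_zero_iff_dvd]

theorem AddSubgroup.card_quotient_of_mem_iff_dvd_snd (hH : ∀ y, y ∈ H ↔ (d : ℤ) ∣ y.2) :
    Nat.card ((M × ℤ) ⧸ H) = d := by
  have hsurj : Function.Surjective ((Int.castAddHom (ZMod d)).comp (AddMonoidHom.snd M ℤ)) :=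
    fun w => ⟨(0, w.valMinAbs), by simp⟩
  rw [← Nat.card_zmod d, Nat.card_congr ((QuotientAddGroup.quotientAddEquivOfEq
    (AddSubgroup.eq_ker_of_mem_iff_dvd_snd hH)).trans
    (QuotientAddGroup.quotientKerEquivOfSurjective _ hsurj)).toEquiv]

theorem AddSubgroup.exists_eq_zsmul_mk_of_mem_iff_dvd_snd (hH : ∀ y, y ∈ H ↔ (d : ℤ) ∣ y.2)
    (x : (M × ℤ) ⧸ H) : ∃ k : ℤ, x = k • (QuotientAddGroup.mk ((0, 1) : M × ℤ)) := by
  obtain ⟨y, rfl⟩ := QuotientAddGroup.mk_surjective x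
  refine ⟨y.2, ?_⟩
  rw [← QuotientAddGroup.mk_zsmul, QuotientAddGroup.eq, hH]
  simp

end QuotientBySnd

theorem stmt5_general (r n : ℕ) (hrodd : Odd r) :
    (((Y0 r ⊔ YQn r n : AddSubgroup ((Fin r → ℤ) × ℤ))) : Set ((Fin r → ℤ) × ℤ))
        = {y | ((n / Nat.gcd n r : ℕ) : ℤ) ∣ y.2} ∧
    Nat.card (((Fin r → ℤ) × ℤ) ⧸ (Y0 r ⊔ YQn r n)) = n / Nat.gcd n r ∧
    ∀ x : ((Fin r → ℤ) × ℤ) ⧸ (Y0 r ⊔ YQn r n),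
      ∃ k : ℤ, x = k • (QuotientAddGroup.mk (((0 : Fin r → ℤ), 1) : (Fin r → ℤ) × ℤ)) := by
  have hmem : ∀ y, y ∈ Y0 r ⊔ YQn r n ↔ ((n / n.gcd r : ℕ) : ℤ) ∣ y.2 := fun y =>
    (mem_Y0_sup_YQn_iff hrodd).trans (Int.natCast_dvd_mul_iff_div_gcd_dvd hrodd.pos.ne' _)
  exact ⟨Set.ext hmem, AddSubgroup.card_quotient_of_mem_iff_dvd_snd hmem,
    AddSubgroup.exists_eq_zsmul_mk_of_mem_iff_dvd_snd hmem⟩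

/-- For `n` even and `r` odd,
`Y_0 + Y_{Q,n} = {y ∈ Y : n_{(r)} ∣ y_0}`; consequently `Y/(Y_0 + Y_{Q,n})` is cyclic of
order `n_{(r)} = n / gcd(n, r)`, generated by the class of `e_0`. -/
theorem stmt5 (r n : ℕ) (hr : 1 ≤ r) (hrodd : Odd r) (hneven : Even n) (hn : 1 ≤ n) :
    (((Y0 r ⊔ YQn r n : AddSubgroup ((Fin r → ℤ) × ℤ))) : Set ((Fin r → ℤ) × ℤ))
        = {y | ((n / Nat.gcd n r : ℕ) : ℤ) ∣ y.2} ∧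
    Nat.card (((Fin r → ℤ) × ℤ) ⧸ (Y0 r ⊔ YQn r n)) = n / Nat.gcd n r ∧
    ∀ x : ((Fin r → ℤ) × ℤ) ⧸ (Y0 r ⊔ YQn r n),
      ∃ k : ℤ, x = k • (QuotientAddGroup.mk (((0 : Fin r → ℤ), 1) : (Fin r → ℤ) × ℤ)) :=
  stmt5_general r n hrodd
end

section
/- With the notation of the context, assume n = 2m is even and r is odd, and define Y^𝔠 := { y ∈ Y : B(y, y') ∈ nℤ for all y' ∈ Y_{0,Q,n} }. Then Y^𝔠 = { y ∈ Y : 2 divides y_0 }, so [Y : Y^𝔠] = 2; moreover Y_0 + Y_{Q,n} ⊆ Y^𝔠, and the subgroup 𝒳^𝔠 := Y^𝔠/(Y_0 + Y_{Q,n}) has index 2 in 𝒳^Γ := Y/(Y_0 + Y_{Q,n}), the nontrivial coset being represented by the class of e_0. -/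
/-- The lattice `Y^𝔠 = {y ∈ Y : B(y, y') ∈ nℤ for all y' ∈ Y_{0,Q,n}}`. -/
def Yfc (r n : ℕ) : AddSubgroup ((Fin r → ℤ) × ℤ) where
  carrier := {y | ∀ y' ∈ Y0Qn r n, (n : ℤ) ∣ GSpB r y y'}
  zero_mem' := by
    intro y' _
    simp [GSpB]
  add_mem' := by
    intro a b ha hb y' hy'
    rw [GSpB_add_left]
    exact dvd_add (ha y' hy') (hb y' hy')
  neg_mem' := by
    intro a ha y' hy'
    rw [GSpB_neg_left]
    exact dvd_neg.mpr (ha y' hy')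

/- A vector `y` pairs with `(v, 0) ∈ Y_0` as `∑ i, (y_0 - 2 y_i) v_i`. Testing membership of
`Y_{0,Q,n}` against the `e_i` gives `Y_{0,Q,2m} = m Y_0`, and testing membership of `Y^𝔠` against
`m e_1 ∈ Y_{0,Q,2m}` forces `2 ∣ y_0 - 2 y_1`; conversely `2 ∣ y_0` makes every coefficient
`y_0 - 2 y_i` even, so the pairing with `m Y_0` lies in `2mℤ`. Thus `Y^𝔠` is the preimage of `2ℤ`
under `y ↦ y_0`, which contains `Y_0 + Y_{Q,n}` and does not contain `e_0`. -/

section GSpB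

variable {r : ℕ}

lemma GSpB_of_snd_eq_zero (y : (Fin r → ℤ) × ℤ) {y' : (Fin r → ℤ) × ℤ} (hy' : y'.2 = 0) :
    GSpB r y y' = ∑ i, (y.2 - 2 * y.1 i) * y'.1 i := by
  simp only [GSpB, hy', mul_zero, add_zero, sub_mul, Finset.sum_sub_distrib, ← Finset.mul_sum,
    mul_assoc]
  ring

lemma GSpB_single (y : (Fin r → ℤ) × ℤ) (i : Fin r) (c : ℤ) :
    GSpB r y (Pi.single i c, 0) = (y.2 - 2 * y.1 i) * c := by
  rw [GSpB_of_snd_eq_zero y rfl, Finset.sum_eq_single i (fun j _ hj => by simp [hj])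
    (by simp)]
  simp

lemma mem_Y0Qn_iff {n : ℕ} {y : (Fin r → ℤ) × ℤ} :
    y ∈ Y0Qn r n ↔ y.2 = 0 ∧ ∀ i, (n : ℤ) ∣ 2 * y.1 i := by
  refine and_congr_right fun hy => ⟨fun h i => ?_, fun h y' hy' => ?_⟩
  · simpa [GSpB_single, hy] using h (Pi.single i 1, 0) rfl
  · rw [GSpB_of_snd_eq_zero y hy']
    exact Finset.dvd_sum fun i _ => by simpa [hy] using (h i).mul_right (y'.1 i)

lemma mem_Y0Qn_two_mul_iff {m : ℕ} {y : (Fin r → ℤ) × ℤ} :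
    y ∈ Y0Qn r (2 * m) ↔ y.2 = 0 ∧ ∀ i, (m : ℤ) ∣ y.1 i := by
  have h2m : ((2 * m : ℕ) : ℤ) = 2 * m := by push_cast; ring
  simp only [mem_Y0Qn_iff, h2m, mul_dvd_mul_iff_left (two_ne_zero (α := ℤ))]

lemma mem_Yfc_two_mul_iff (hr : r ≠ 0) {m : ℕ} (hm : m ≠ 0) {y : (Fin r → ℤ) × ℤ} :
    y ∈ Yfc r (2 * m) ↔ (2 : ℤ) ∣ y.2 := by
  have h2m : ((2 * m : ℕ) : ℤ) = 2 * m := by push_cast; ring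
  constructor
  · intro h
    let i₀ : Fin r := ⟨0, Nat.pos_of_ne_zero hr⟩
    have hmem : ((Pi.single i₀ (m : ℤ), 0) : (Fin r → ℤ) × ℤ) ∈ Y0Qn r (2 * m) := by
      refine mem_Y0Qn_two_mul_iff.2 ⟨rfl, fun i => ?_⟩
      rcases eq_or_ne i i₀ with rfl | hi <;> simp [*]
    have hdvd : (2 : ℤ) ∣ y.2 - 2 * y.1 i₀ := by
      have := h _ hmem
      rwa [GSpB_single, h2m, mul_dvd_mul_iff_right (by exact_mod_cast hm)] at this
    simpa using hdvd.add (dvd_mul_right 2 (y.1 i₀))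
  · intro h y' hy'
    obtain ⟨hy'0, hy'm⟩ := mem_Y0Qn_two_mul_iff.1 hy'
    rw [GSpB_of_snd_eq_zero y hy'0, h2m]
    exact Finset.dvd_sum fun i _ => mul_dvd_mul (h.sub (dvd_mul_right 2 _)) (hy'm i)

lemma YQn_le_Yfc (n : ℕ) : YQn r n ≤ Yfc r n :=
  fun _ hy y' _ => hy y'

end GSpB

theorem stmt7_general (r m : ℕ) (hr : 1 ≤ r) (hm : 1 ≤ m) :
    ((Yfc r (2 * m) : AddSubgroup ((Fin r → ℤ) × ℤ)) : Set ((Fin r → ℤ) × ℤ))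
        = {y | (2 : ℤ) ∣ y.2} ∧
    (Yfc r (2 * m)).index = 2 ∧
    Y0 r ⊔ YQn r (2 * m) ≤ Yfc r (2 * m) ∧
    ((Yfc r (2 * m)).map (QuotientAddGroup.mk' (Y0 r ⊔ YQn r (2 * m)))).index = 2 ∧
    QuotientAddGroup.mk' (Y0 r ⊔ YQn r (2 * m)) (((0 : Fin r → ℤ), 1) : (Fin r → ℤ) × ℤ)
      ∉ (Yfc r (2 * m)).map (QuotientAddGroup.mk' (Y0 r ⊔ YQn r (2 * m))) := by
  have hmem (y : (Fin r → ℤ) × ℤ) : y ∈ Yfc r (2 * m) ↔ (2 : ℤ) ∣ y.2 :=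
    mem_Yfc_two_mul_iff (by omega) (by omega)
  have hcomap : Yfc r (2 * m) =
      (AddSubgroup.zmultiples (2 : ℤ)).comap (AddMonoidHom.snd (Fin r → ℤ) ℤ) := by
    ext y
    simp [hmem, Int.mem_zmultiples_iff]
  have hindex : (Yfc r (2 * m)).index = 2 := by
    rw [hcomap, AddSubgroup.index_comap_of_surjective _ Prod.snd_surjective,
      Int.index_zmultiples]
    rfl
  have hle : Y0 r ⊔ YQn r (2 * m) ≤ Yfc r (2 * m) :=
    sup_le (fun y (hy : y.2 = 0) => (hmem y).2 (hy ▸ dvd_zero 2)) (YQn_le_Yfc _)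
  have hker : (QuotientAddGroup.mk' (Y0 r ⊔ YQn r (2 * m))).ker ≤ Yfc r (2 * m) := by
    rwa [QuotientAddGroup.ker_mk']
  refine ⟨Set.ext hmem, hindex, hle,
    (AddSubgroup.index_map_eq _ (QuotientAddGroup.mk'_surjective _) hker).trans hindex, ?_⟩
  rw [← AddSubgroup.mem_comap, AddSubgroup.comap_map_eq, sup_eq_left.2 hker, hmem]
  norm_num

/-- For `n = 2m` even and `r` odd: `Y^𝔠 = {y ∈ Y : 2 ∣ y_0}`, so
`[Y : Y^𝔠] = 2`; moreover `Y_0 + Y_{Q,n} ⊆ Y^𝔠` and the subgroup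
`𝒳^𝔠 = Y^𝔠/(Y_0 + Y_{Q,n})` has index 2 in `𝒳^Γ = Y/(Y_0 + Y_{Q,n})`, the nontrivial
coset being represented by the class of `e_0`. -/
theorem stmt7 (r m : ℕ) (hr : 1 ≤ r) (hrodd : Odd r) (hm : 1 ≤ m) :
    ((Yfc r (2 * m) : AddSubgroup ((Fin r → ℤ) × ℤ)) : Set ((Fin r → ℤ) × ℤ))
        = {y | (2 : ℤ) ∣ y.2} ∧
    (Yfc r (2 * m)).index = 2 ∧
    Y0 r ⊔ YQn r (2 * m) ≤ Yfc r (2 * m) ∧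
    ((Yfc r (2 * m)).map (QuotientAddGroup.mk' (Y0 r ⊔ YQn r (2 * m)))).index = 2 ∧
    QuotientAddGroup.mk' (Y0 r ⊔ YQn r (2 * m)) (((0 : Fin r → ℤ), 1) : (Fin r → ℤ) × ℤ)
      ∉ (Yfc r (2 * m)).map (QuotientAddGroup.mk' (Y0 r ⊔ YQn r (2 * m))) :=
  stmt7_general r m hr hm
end

section
/- With the notation of the context, assume 2𝐩 − 𝐪 = −1 (the Kazhdan–Patterson case) and r ≥ 2. Then Y_0 ∩ Y_{Q,n} = nY_0, and the index [Y_{0,Q,n} : Y_0 ∩ Y_{Q,n}] equals gcd(n, r). -/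
/-- The symmetric bilinear form on `Y = ℤ^r` attached to an `n`-fold Brylinski–Deligne
cover of `GL_r`: `B(e_i, e_i) = 2𝐩` and `B(e_i, e_j) = 𝐪` for `i ≠ j`. -/
def BGL (r : ℕ) (p q : ℤ) (x y : Fin r → ℤ) : ℤ :=
  2 * p * (∑ i, x i * y i) + q * ((∑ i, x i) * (∑ i, y i) - ∑ i, x i * y i)

lemma BGL_add_left (r : ℕ) (p q : ℤ) (a b y : Fin r → ℤ) :
    BGL r p q (a + b) y = BGL r p q a y + BGL r p q b y := by
  simp only [BGL, Pi.add_apply, add_mul, Finset.sum_add_distrib]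
  ring

lemma BGL_neg_left (r : ℕ) (p q : ℤ) (a y : Fin r → ℤ) :
    BGL r p q (-a) y = -BGL r p q a y := by
  simp only [BGL, Pi.neg_apply, neg_mul, Finset.sum_neg_distrib]
  ring

/-- The lattice `Y_{Q,n} = {y ∈ Y : B(y, y') ∈ nℤ for all y' ∈ Y}`. -/
def YQnGL (r n : ℕ) (p q : ℤ) : AddSubgroup (Fin r → ℤ) where
  carrier := {y | ∀ y', (n : ℤ) ∣ BGL r p q y y'}
  zero_mem' := by
    intro y'
    simp [BGL]
  add_mem' := by
    intro a b ha hb y'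
    rw [BGL_add_left]
    exact dvd_add (ha y') (hb y')
  neg_mem' := by
    intro a ha y'
    rw [BGL_neg_left]
    exact dvd_neg.mpr (ha y')

/-- `n_α = n / gcd(n, Q(α^∨))` with `Q(α^∨) = 2𝐩 - 𝐪`. -/
def nAlpha (n : ℕ) (p q : ℤ) : ℕ := n / Int.gcd (n : ℤ) (2 * p - q)

/-- The coroot lattice `Y_0 = {y ∈ ℤ^r : y_1 + ⋯ + y_r = 0}` of `GL_r`. -/
def Y0GL (r : ℕ) : AddSubgroup (Fin r → ℤ) where
  carrier := {y | ∑ i, y i = 0}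
  zero_mem' := by simp
  add_mem' := by
    intro a b ha hb
    have ha' : ∑ i, a i = 0 := ha
    have hb' : ∑ i, b i = 0 := hb
    show ∑ i, (a + b) i = 0
    simp only [Pi.add_apply, Finset.sum_add_distrib, ha', hb', add_zero]
  neg_mem' := by
    intro a ha
    have ha' : ∑ i, a i = 0 := ha
    show ∑ i, (-a) i = 0
    simp only [Pi.neg_apply, Finset.sum_neg_distrib, ha', neg_zero]

/-- The lattice `Y_{0,Q,n} = {y ∈ Y_0 : B(y, y') ∈ nℤ for all y' ∈ Y_0}`. -/
def Y0QnGL (r n : ℕ) (p q : ℤ) : AddSubgroup (Fin r → ℤ) where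
  carrier := {y | (∑ i, y i = 0) ∧
      ∀ y' : Fin r → ℤ, (∑ i, y' i = 0) → (n : ℤ) ∣ BGL r p q y y'}
  zero_mem' := ⟨by simp, fun y' _ => by simp [BGL]⟩
  add_mem' := by
    rintro a b ⟨ha0, ha⟩ ⟨hb0, hb⟩
    refine ⟨?_, fun y' hy' => ?_⟩
    · simp only [Pi.add_apply, Finset.sum_add_distrib, ha0, hb0, add_zero]
    · rw [BGL_add_left]
      exact dvd_add (ha y' hy') (hb y' hy')
  neg_mem' := by
    rintro a ⟨ha0, ha⟩
    refine ⟨?_, fun y' hy' => ?_⟩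
    · simp only [Pi.neg_apply, Finset.sum_neg_distrib, ha0, neg_zero]
    · rw [BGL_neg_left]
      exact dvd_neg.mpr (ha y' hy')

/-!
On `Y_0` the form is `B(x, y) = (2𝐩 - 𝐪) ⟨x, y⟩`, and `2𝐩 - 𝐪 = -1` is a unit mod `n`. Testing
against basis vectors (resp. differences of basis vectors) shows that `Y_0 ∩ Y_{Q,n}` consists of
the `y ∈ Y_0` with all coordinates divisible by `n`, and `Y_{0,Q,n}` of the `y ∈ Y_0` with all
coordinates congruent mod `n`. Reducing the first coordinate mod `n` maps `Y_{0,Q,n}` onto the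
`r`-torsion of `ℤ/n` with kernel `Y_0 ∩ Y_{Q,n}`, and that torsion subgroup has `gcd(n, r)`
elements.
-/

open Matrix

lemma BGL_eq_mul_dotProduct_of_sum_eq_zero (r : ℕ) (p q : ℤ) {x : Fin r → ℤ}
    (hx : ∑ i, x i = 0) (y : Fin r → ℤ) : BGL r p q x y = (2 * p - q) * (x ⬝ᵥ y) := by
  rw [BGL, hx, dotProduct]
  ring

lemma dvd_BGL_iff_dvd_dotProduct {r n : ℕ} {p q : ℤ} (hpq : IsCoprime (n : ℤ) (2 * p - q))
    {x : Fin r → ℤ} (hx : ∑ i, x i = 0) (y : Fin r → ℤ) :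
    (n : ℤ) ∣ BGL r p q x y ↔ (n : ℤ) ∣ x ⬝ᵥ y := by
  rw [BGL_eq_mul_dotProduct_of_sum_eq_zero r p q hx]
  exact ⟨hpq.dvd_of_dvd_mul_left, (dvd_mul_of_dvd_right · _)⟩

lemma mem_Y0GL_inf_YQnGL_iff {r n : ℕ} {p q : ℤ} (hpq : IsCoprime (n : ℤ) (2 * p - q))
    {y : Fin r → ℤ} :
    y ∈ Y0GL r ⊓ YQnGL r n p q ↔ (∑ i, y i = 0) ∧ ∀ i, (n : ℤ) ∣ y i := by
  refine and_congr_right fun (hy : ∑ i, y i = 0) => ?_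
  show (∀ y', (n : ℤ) ∣ BGL r p q y y') ↔ _
  simp_rw [dvd_BGL_iff_dvd_dotProduct hpq hy]
  refine ⟨fun h i => by simpa using h (Pi.single i 1), fun h y' => ?_⟩
  exact Finset.dvd_sum fun i _ => (h i).mul_right _

lemma mem_Y0QnGL_iff {r n : ℕ} {p q : ℤ} (hpq : IsCoprime (n : ℤ) (2 * p - q))
    {y : Fin r → ℤ} :
    y ∈ Y0QnGL r n p q ↔ (∑ i, y i = 0) ∧ ∀ i j, (y i : ZMod n) = y j := by
  refine and_congr_right fun hy => ?_
  simp_rw [dvd_BGL_iff_dvd_dotProduct hpq hy, ← ZMod.intCast_zmod_eq_zero_iff_dvd]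
  constructor
  · intro h i j
    have := h (Pi.single i 1 - Pi.single j 1) (by simp [Finset.sum_sub_distrib])
    simpa [dotProduct_sub, sub_eq_zero] using this
  · intro h y' hy'
    rcases isEmpty_or_nonempty (Fin r) with _ | ⟨⟨j⟩⟩
    · simp
    calc ((y ⬝ᵥ y' : ℤ) : ZMod n) = ∑ i, (y j : ZMod n) * y' i := by
          simp only [dotProduct, Int.cast_sum, Int.cast_mul, h _ j]
      _ = 0 := by rw [← Finset.mul_sum, ← Int.cast_sum, hy', Int.cast_zero, mul_zero]

def Y0QnGL.coordZeroMod (r n : ℕ) [NeZero r] (p q : ℤ) : Y0QnGL r n p q →+ ZMod n :=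
  (Int.castAddHom (ZMod n)).comp
    ((Pi.evalAddMonoidHom (fun _ : Fin r => ℤ) 0).comp (Y0QnGL r n p q).subtype)

namespace Y0QnGL

variable {r n : ℕ} [NeZero r] {p q : ℤ}

lemma coordZeroMod_apply (y : Y0QnGL r n p q) :
    coordZeroMod r n p q y = ((y : Fin r → ℤ) 0 : ZMod n) :=
  rfl

lemma ker_coordZeroMod (hpq : IsCoprime (n : ℤ) (2 * p - q)) :
    (coordZeroMod r n p q).ker = (Y0GL r ⊓ YQnGL r n p q).addSubgroupOf (Y0QnGL r n p q) := by
  ext ⟨y, hy⟩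
  obtain ⟨hsum, hcong⟩ := (mem_Y0QnGL_iff hpq).mp hy
  simp only [AddMonoidHom.mem_ker, coordZeroMod_apply, AddSubgroup.mem_addSubgroupOf,
    mem_Y0GL_inf_YQnGL_iff hpq, ← ZMod.intCast_zmod_eq_zero_iff_dvd, hcong _ 0]
  exact ⟨fun h => ⟨hsum, fun _ => h⟩, fun h => h.2 0⟩

lemma range_coordZeroMod (hpq : IsCoprime (n : ℤ) (2 * p - q)) :
    (coordZeroMod r n p q).range = (nsmulAddMonoidHom r : ZMod n →+ ZMod n).ker := by
  ext c
  simp only [AddMonoidHom.mem_range, AddMonoidHom.mem_ker, nsmulAddMonoidHom_apply]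
  constructor
  · rintro ⟨⟨y, hy⟩, rfl⟩
    obtain ⟨hsum, hcong⟩ := (mem_Y0QnGL_iff hpq).mp hy
    calc r • ((y 0 : ℤ) : ZMod n) = ∑ i, ((y i : ℤ) : ZMod n) := by simp [hcong _ 0]
      _ = 0 := by rw [← Int.cast_sum, hsum, Int.cast_zero]
  · intro hc
    obtain ⟨a, rfl⟩ := ZMod.intCast_surjective c
    have hra : ((r * a : ℤ) : ZMod n) = 0 := by simpa using hc
    set y : Fin r → ℤ := Function.const _ a - Pi.single 0 (r * a)
    have hy : ∀ i, ((y i : ℤ) : ZMod n) = a := fun i => by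
      rcases eq_or_ne i 0 with rfl | hi
      · simp [y, hra]
      · simp [y, hi]
    have hsum : ∑ i, y i = 0 := by simp [y, Finset.sum_sub_distrib]
    refine ⟨⟨y, (mem_Y0QnGL_iff hpq).mpr ⟨hsum, fun i j => by rw [hy, hy]⟩⟩, hy 0⟩

end Y0QnGL

/-- In the Kazhdan–Patterson case `2𝐩 - 𝐪 = -1` with `r ≥ 2`:
`Y_0 ∩ Y_{Q,n} = nY_0` and `[Y_{0,Q,n} : Y_0 ∩ Y_{Q,n}] = gcd(n, r)`. -/
theorem stmt14 (r n : ℕ) (hr : 2 ≤ r) (hn : 0 < n) (p q : ℤ) (hpq : 2 * p - q = -1) :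
    ((Y0GL r ⊓ YQnGL r n p q : AddSubgroup (Fin r → ℤ)) : Set (Fin r → ℤ))
        = {y | (∑ i, y i = 0) ∧ ∀ i, (n : ℤ) ∣ y i} ∧
    (Y0GL r ⊓ YQnGL r n p q).relIndex (Y0QnGL r n p q) = Nat.gcd n r := by
  have hcop : IsCoprime (n : ℤ) (2 * p - q) := hpq ▸ isCoprime_one_right.neg_right
  refine ⟨Set.ext fun y => mem_Y0GL_inf_YQnGL_iff hcop, ?_⟩
  have : NeZero n := ⟨hn.ne'⟩
  have : NeZero r := ⟨by omega⟩
  rw [AddSubgroup.relIndex, ← Y0QnGL.ker_coordZeroMod hcop, AddSubgroup.index_ker,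
    Y0QnGL.range_coordZeroMod hcop, IsAddCyclic.card_nsmulAddMonoidHom_ker, Nat.card_zmod]
end

section
/- With the notation of the context, assume in addition that n is odd, and set e_c := e_1 + e_2. Then the elements k·e_c for 0 ≤ k ≤ n/d − 1 form a complete set of representatives for the quotient group Y/(Y^{sc} + Y_{Q,n}); in particular this quotient has order n/d. Moreover (n/d)·e_c ∈ Y_{Q,n}, so k ↦ class of k·e_c defines a group-homomorphic splitting of the natural surjection Y/Y_{Q,n} ↠ Y/(Y^{sc} + Y_{Q,n}), and since e_c is fixed by the coordinate swap (y_1, y_2) ↦ (y_2, y_1), this splitting is equivariant for the Weyl group action (the swap action on Y/Y_{Q,n}, and the trivial action on Y/(Y^{sc} + Y_{Q,n})). -/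
/-- The symmetric bilinear form on `Y = ℤ²` attached to the `n`-fold Kazhdan–Patterson
cover of `GL_2` (parameters `𝐩` and `𝐪 = 2𝐩 + 1`):
`B(e_1,e_1) = B(e_2,e_2) = 2𝐩` and `B(e_1,e_2) = 𝐪`. -/
def B2 (p : ℤ) (x y : ℤ × ℤ) : ℤ :=
  2 * p * (x.1 * y.1 + x.2 * y.2) + (2 * p + 1) * (x.1 * y.2 + x.2 * y.1)

lemma B2_add_left (p : ℤ) (a b y : ℤ × ℤ) :
    B2 p (a + b) y = B2 p a y + B2 p b y := by
  simp only [B2, Prod.fst_add, Prod.snd_add]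
  ring

lemma B2_neg_left (p : ℤ) (a y : ℤ × ℤ) : B2 p (-a) y = -B2 p a y := by
  simp only [B2, Prod.fst_neg, Prod.snd_neg]
  ring

/-- The lattice `Y_{Q,n} = {y ∈ Y : B(y, y') ∈ nℤ for all y' ∈ Y}`. -/
def YQn2 (n : ℕ) (p : ℤ) : AddSubgroup (ℤ × ℤ) where
  carrier := {y | ∀ y', (n : ℤ) ∣ B2 p y y'}
  zero_mem' := by
    intro y'
    simp [B2]
  add_mem' := by
    intro a b ha hb y'
    rw [B2_add_left]
    exact dvd_add (ha y') (hb y')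
  neg_mem' := by
    intro a ha y'
    rw [B2_neg_left]
    exact dvd_neg.mpr (ha y')

/-!
Pairing `y` with `e₁` and `e₂` shows that `y ∈ Y_{Q,n}` iff `n` divides `B(y, e₁)` and
`B(y, e₂)`; as `n` is odd, this amounts to `n` dividing their sum `(4𝐩 + 1)(y₁ + y₂)` and their
difference `y₁ - y₂`, i.e. to `n/d ∣ y₁ + y₂` and `n ∣ y₁ - y₂`. Adding `ℤ(e₁ - e₂)` removes the second condition, so `y ↦ y₁ + y₂`
identifies `Y/(Y^{sc} + Y_{Q,n})` with `ℤ/(n/d)`, sending `k·e_c` to `2k`; since `n/d` is odd,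
`2` is a unit there. The splitting sends the generator to `c·e_c` with `2c ≡ 1 mod n/d`. Its
values are classes of multiples of `e_c`, and these are fixed by the swap because `B` and hence
`Y_{Q,n}` are swap-invariant.
-/
theorem Int.natCast_dvd_mul_iff_div_gcd_dvd_s18 {n : ℕ} (hn : 0 < n) (a s : ℤ) :
    (n : ℤ) ∣ a * s ↔ ((n / Int.gcd a n : ℕ) : ℤ) ∣ s := by
  constructor
  · intro h
    have := Int.ModEq.cancel_left_div_gcd (Int.natCast_pos.mpr hn) (a := s) (b := 0) (c := a)
      (by rw [mul_zero]; exact Int.modEq_zero_iff_dvd.mpr h)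
    rwa [Int.modEq_zero_iff_dvd, Int.gcd_comm, ← Int.natCast_div] at this
  · rintro ⟨t, rfl⟩
    have hg : Int.gcd a n ∣ n := Int.natCast_dvd_natCast.mp (Int.gcd_dvd_right a n)
    calc (n : ℤ) = Int.gcd a n * (n / Int.gcd a n : ℕ) := by
          exact_mod_cast (Nat.mul_div_cancel' hg).symm
      _ ∣ a * ((n / Int.gcd a n : ℕ) * t) := mul_dvd_mul (Int.gcd_dvd_left a n) (dvd_mul_right _ t)

theorem Odd.div_gcd {n : ℕ} (hodd : Odd n) (a : ℤ) : Odd (n / Int.gcd a n) :=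
  hodd.of_dvd_nat (Nat.div_dvd_of_dvd (Int.natCast_dvd_natCast.mp (Int.gcd_dvd_right a n)))

theorem Odd.natCast_dvd_two_mul_iff {n : ℕ} (hodd : Odd n) (a : ℤ) :
    (n : ℤ) ∣ 2 * a ↔ (n : ℤ) ∣ a :=
  ⟨(Int.isCoprime_two_right.mpr hodd.natCast).dvd_of_dvd_mul_left, (dvd_mul_of_dvd_right · 2)⟩

theorem Odd.natCast_dvd_and_dvd_iff {n : ℕ} (hodd : Odd n) (u v : ℤ) :
    (n : ℤ) ∣ u ∧ (n : ℤ) ∣ v ↔ (n : ℤ) ∣ u + v ∧ (n : ℤ) ∣ u - v := by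
  refine ⟨fun ⟨hu, hv⟩ => ⟨dvd_add hu hv, dvd_sub hu hv⟩, fun ⟨hadd, hsub⟩ => ⟨?_, ?_⟩⟩
  · rw [← hodd.natCast_dvd_two_mul_iff, show 2 * u = u + v + (u - v) by ring]
    exact dvd_add hadd hsub
  · rw [← hodd.natCast_dvd_two_mul_iff, show 2 * v = u + v - (u - v) by ring]
    exact dvd_sub hadd hsub

theorem ZMod.existsUnique_lt_unit_mul_natCast_eq {m : ℕ} [NeZero m] (a : (ZMod m)ˣ)
    (z : ZMod m) : ∃! k : ℕ, k < m ∧ (a : ZMod m) * k = z := by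
  refine ⟨(a⁻¹ * z).val, ⟨ZMod.val_lt _, by simp⟩, ?_⟩
  rintro k ⟨hk, rfl⟩
  rw [Units.inv_mul_cancel_left, ZMod.val_natCast_of_lt hk]

theorem B2_swap (p : ℤ) (y y' : ℤ × ℤ) : B2 p y.swap y'.swap = B2 p y y' := by
  simp only [B2, Prod.fst_swap, Prod.snd_swap]
  ring

theorem swap_mem_YQn2 {n : ℕ} {p : ℤ} {y : ℤ × ℤ} (hy : y ∈ YQn2 n p) : y.swap ∈ YQn2 n p :=
  fun y' => by
    rw [← B2_swap p y.swap y', Prod.swap_swap]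
    exact hy _

theorem mem_YQn2_iff_dvd_B2_single {n : ℕ} {p : ℤ} {y : ℤ × ℤ} :
    y ∈ YQn2 n p ↔ (n : ℤ) ∣ B2 p y (0, 1) ∧ (n : ℤ) ∣ B2 p y (1, 0) := by
  refine ⟨fun h => ⟨h _, h _⟩, fun ⟨h₂, h₁⟩ y' => ?_⟩
  have : B2 p y y' = B2 p y (1, 0) * y'.1 + B2 p y (0, 1) * y'.2 := by
    simp only [B2]
    ring
  rw [this]
  exact dvd_add (h₁.mul_right _) (h₂.mul_right _)

theorem mem_YQn2_iff {n : ℕ} (hodd : Odd n) (p : ℤ) (y : ℤ × ℤ) :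
    y ∈ YQn2 n p ↔
      ((n / Int.gcd (4 * p + 1) n : ℕ) : ℤ) ∣ y.1 + y.2 ∧ (n : ℤ) ∣ y.1 - y.2 := by
  rw [mem_YQn2_iff_dvd_B2_single, hodd.natCast_dvd_and_dvd_iff,
    ← Int.natCast_dvd_mul_iff_div_gcd_dvd_s18 hodd.pos]
  have hadd : B2 p y (0, 1) + B2 p y (1, 0) = (4 * p + 1) * (y.1 + y.2) := by
    simp only [B2]
    ring
  have hsub : B2 p y (0, 1) - B2 p y (1, 0) = y.1 - y.2 := by
    simp only [B2]
    ring
  rw [hadd, hsub]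

theorem smul_one_one_mem_YQn2_iff {n : ℕ} (hodd : Odd n) (p k : ℤ) :
    k • ((1, 1) : ℤ × ℤ) ∈ YQn2 n p ↔ ((n / Int.gcd (4 * p + 1) n : ℕ) : ℤ) ∣ k := by
  rw [mem_YQn2_iff hodd, ← (hodd.div_gcd _).natCast_dvd_two_mul_iff (a := k), two_mul]
  simp only [Prod.smul_fst, Prod.smul_snd, smul_eq_mul, mul_one, sub_self, dvd_zero, and_true]

theorem mem_zmultiples_sup_YQn2_iff {n : ℕ} (hodd : Odd n) (p : ℤ) (y : ℤ × ℤ) :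
    y ∈ AddSubgroup.zmultiples ((1, -1) : ℤ × ℤ) ⊔ YQn2 n p ↔
      ((n / Int.gcd (4 * p + 1) n : ℕ) : ℤ) ∣ y.1 + y.2 := by
  constructor
  · intro h
    obtain ⟨_, ⟨t, rfl⟩, b, hb, rfl⟩ := AddSubgroup.mem_sup.mp h
    convert ((mem_YQn2_iff hodd p b).mp hb).1 using 1
    simp only [Prod.smul_mk, Prod.fst_add, Prod.snd_add, smul_eq_mul]
    ring
  · intro hs
    obtain ⟨r, hr⟩ := hodd
    set s := y.1 + y.2 with hs_def
    -- the element of `Y_{Q,n}` with coordinate sum `s` and coordinate difference `n s`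
    have hb : ((r + 1) * s, -(r * s)) ∈ YQn2 n p := by
      refine (mem_YQn2_iff ⟨r, hr⟩ p _).mpr ⟨?_, s, ?_⟩
      · rwa [show (r + 1) * s + -(r * s) = s by ring]
      · push_cast [hr]
        ring
    refine AddSubgroup.mem_sup.mpr ⟨(y.1 - (r + 1) * s) • (1, -1), ⟨_, rfl⟩, _, hb, ?_⟩
    ext
    · simp only [Prod.smul_mk, Prod.fst_add, smul_eq_mul]
      ring
    · simp only [Prod.smul_mk, Prod.snd_add, smul_eq_mul]
      linear_combination hs_def

def coordSumMod (m : ℕ) : ℤ × ℤ →+ ZMod m :=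
  (Int.castAddHom (ZMod m)).coprod (Int.castAddHom (ZMod m))

theorem coordSumMod_apply (m : ℕ) (y : ℤ × ℤ) : coordSumMod m y = ((y.1 + y.2 : ℤ) : ZMod m) := by
  simp [coordSumMod]

theorem zmultiples_sup_YQn2_eq_ker {n : ℕ} (hodd : Odd n) (p : ℤ) :
    AddSubgroup.zmultiples ((1, -1) : ℤ × ℤ) ⊔ YQn2 n p =
      (coordSumMod (n / Int.gcd (4 * p + 1) n)).ker := by
  ext y
  rw [mem_zmultiples_sup_YQn2_iff hodd, AddMonoidHom.mem_ker, coordSumMod_apply,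
    ZMod.intCast_zmod_eq_zero_iff_dvd]

theorem coordSumMod_surjective (m : ℕ) : Function.Surjective (coordSumMod m) := fun z => by
  obtain ⟨k, rfl⟩ := ZMod.intCast_surjective z
  exact ⟨(k, 0), by simp [coordSumMod_apply]⟩

noncomputable def quotientEquivZMod {n : ℕ} (hodd : Odd n) (p : ℤ) :
    (ℤ × ℤ) ⧸ (AddSubgroup.zmultiples ((1, -1) : ℤ × ℤ) ⊔ YQn2 n p) ≃+
      ZMod (n / Int.gcd (4 * p + 1) n) :=
  (QuotientAddGroup.quotientAddEquivOfEq (zmultiples_sup_YQn2_eq_ker hodd p)).trans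
    (QuotientAddGroup.quotientKerEquivOfSurjective _ (coordSumMod_surjective _))

theorem quotientEquivZMod_mk {n : ℕ} (hodd : Odd n) (p : ℤ) (y : ℤ × ℤ) :
    quotientEquivZMod hodd p (y : (ℤ × ℤ) ⧸ (AddSubgroup.zmultiples ((1, -1) : ℤ × ℤ) ⊔ YQn2 n p))
      = coordSumMod _ y :=
  rfl

theorem existsUnique_lt_mk_smul_one_one_eq {n : ℕ} (hodd : Odd n) (p : ℤ)
    (x : (ℤ × ℤ) ⧸ (AddSubgroup.zmultiples ((1, -1) : ℤ × ℤ) ⊔ YQn2 n p)) :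
    ∃! k : ℕ, k < n / Int.gcd (4 * p + 1) n ∧
      QuotientAddGroup.mk ((k : ℤ) • ((1, 1) : ℤ × ℤ)) = x := by
  set m := n / Int.gcd (4 * p + 1) n
  have hm : Odd m := hodd.div_gcd (4 * p + 1)
  have : NeZero m := ⟨hm.pos.ne'⟩
  let two := ZMod.unitOfCoprime 2 (Nat.coprime_two_left.mpr hm)
  have key : ∀ k : ℕ, QuotientAddGroup.mk ((k : ℤ) • ((1, 1) : ℤ × ℤ)) = x ↔
      (two : ZMod m) * k = quotientEquivZMod hodd p x := by
    intro k
    rw [← (quotientEquivZMod hodd p).injective.eq_iff, quotientEquivZMod_mk, coordSumMod_apply,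
      ZMod.coe_unitOfCoprime]
    simp only [Prod.smul_mk, smul_eq_mul, mul_one]
    push_cast
    rw [two_mul]
  simpa only [key] using ZMod.existsUnique_lt_unit_mul_natCast_eq two (quotientEquivZMod hodd p x)

theorem card_quotient_zmultiples_sup_YQn2 {n : ℕ} (hodd : Odd n) (p : ℤ) :
    Nat.card ((ℤ × ℤ) ⧸ (AddSubgroup.zmultiples ((1, -1) : ℤ × ℤ) ⊔ YQn2 n p)) =
      n / Int.gcd (4 * p + 1) n :=
  (Nat.card_congr (quotientEquivZMod hodd p).toEquiv).trans (Nat.card_zmod _)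

theorem mk_smul_one_one_eq_mk_smul_one_one_iff {n : ℕ} (hodd : Odd n) (p a b : ℤ) :
    (QuotientAddGroup.mk (a • ((1, 1) : ℤ × ℤ)) : (ℤ × ℤ) ⧸ YQn2 n p) =
        QuotientAddGroup.mk (b • ((1, 1) : ℤ × ℤ)) ↔
      ((n / Int.gcd (4 * p + 1) n : ℕ) : ℤ) ∣ b - a := by
  rw [QuotientAddGroup.eq, ← neg_smul, ← add_smul, smul_one_one_mem_YQn2_iff hodd,
    neg_add_eq_sub]

theorem exists_addMonoidHom_mk_smul_one_one {n : ℕ} (hodd : Odd n) (p : ℤ) :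
    ∃ s : (ℤ × ℤ) ⧸ (AddSubgroup.zmultiples ((1, -1) : ℤ × ℤ) ⊔ YQn2 n p) →+
        (ℤ × ℤ) ⧸ YQn2 n p,
      ∀ k : ℤ, s (QuotientAddGroup.mk (k • ((1, 1) : ℤ × ℤ))) =
        QuotientAddGroup.mk (k • ((1, 1) : ℤ × ℤ)) := by
  obtain ⟨r, hr⟩ := hodd.div_gcd (4 * p + 1)
  have hr' : ((n / Int.gcd (4 * p + 1) n : ℕ) : ℤ) = 2 * r + 1 := by exact_mod_cast hr
  -- `r + 1` is the inverse of `2` modulo `n / d`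
  let ψ : ℤ →+ (ℤ × ℤ) ⧸ YQn2 n p := zmultiplesHom _
    (QuotientAddGroup.mk ((r + 1 : ℤ) • ((1, 1) : ℤ × ℤ)))
  have hψ : ψ (n / Int.gcd (4 * p + 1) n : ℕ) = 0 := by
    rw [zmultiplesHom_apply, ← QuotientAddGroup.mk_zsmul, smul_smul, ← QuotientAddGroup.mk_zero,
      ← zero_smul ℤ ((1, 1) : ℤ × ℤ), mk_smul_one_one_eq_mk_smul_one_one_iff hodd]
    exact ⟨-(r + 1), by ring⟩
  refine ⟨(ZMod.lift _ ⟨ψ, hψ⟩).comp (quotientEquivZMod hodd p).toAddMonoidHom, fun k => ?_⟩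
  rw [AddMonoidHom.comp_apply, AddEquiv.coe_toAddMonoidHom, quotientEquivZMod_mk,
    coordSumMod_apply, ZMod.lift_coe, zmultiplesHom_apply, ← QuotientAddGroup.mk_zsmul, smul_smul,
    mk_smul_one_one_eq_mk_smul_one_one_iff hodd, hr']
  exact ⟨-k, by simp only [Prod.smul_mk, smul_eq_mul, mul_one]; ring⟩

theorem mk_swap_eq_mk_swap {n : ℕ} {p : ℤ} {y z : ℤ × ℤ}
    (h : (QuotientAddGroup.mk y : (ℤ × ℤ) ⧸ YQn2 n p) = QuotientAddGroup.mk z) :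
    (QuotientAddGroup.mk y.swap : (ℤ × ℤ) ⧸ YQn2 n p) = QuotientAddGroup.mk z.swap := by
  rw [QuotientAddGroup.eq] at h ⊢
  simpa using swap_mem_YQn2 h

theorem stmt18_general (n : ℕ) (hodd : Odd n) (p : ℤ) :
    (∀ x : (ℤ × ℤ) ⧸ (AddSubgroup.zmultiples ((1, -1) : ℤ × ℤ) ⊔ YQn2 n p),
        ∃! k : ℕ, k < n / Int.gcd (4 * p + 1) (n : ℤ) ∧
          QuotientAddGroup.mk ((k : ℤ) • ((1, 1) : ℤ × ℤ)) = x) ∧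
    Nat.card ((ℤ × ℤ) ⧸ (AddSubgroup.zmultiples ((1, -1) : ℤ × ℤ) ⊔ YQn2 n p))
        = n / Int.gcd (4 * p + 1) (n : ℤ) ∧
    ((n / Int.gcd (4 * p + 1) (n : ℤ) : ℕ) : ℤ) • ((1, 1) : ℤ × ℤ) ∈ YQn2 n p ∧
    ∃ s : ((ℤ × ℤ) ⧸ (AddSubgroup.zmultiples ((1, -1) : ℤ × ℤ) ⊔ YQn2 n p)) →+
        ((ℤ × ℤ) ⧸ YQn2 n p),
      (∀ k : ℤ, s (QuotientAddGroup.mk (k • ((1, 1) : ℤ × ℤ)))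
          = QuotientAddGroup.mk (k • ((1, 1) : ℤ × ℤ))) ∧
      (∀ (x : (ℤ × ℤ) ⧸ (AddSubgroup.zmultiples ((1, -1) : ℤ × ℤ) ⊔ YQn2 n p)) (y : ℤ × ℤ),
          s x = QuotientAddGroup.mk y →
            (QuotientAddGroup.mk y :
              (ℤ × ℤ) ⧸ (AddSubgroup.zmultiples ((1, -1) : ℤ × ℤ) ⊔ YQn2 n p)) = x) ∧
      (∀ (x : (ℤ × ℤ) ⧸ (AddSubgroup.zmultiples ((1, -1) : ℤ × ℤ) ⊔ YQn2 n p)) (y : ℤ × ℤ),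
          s x = QuotientAddGroup.mk y → s x = QuotientAddGroup.mk (Prod.swap y)) := by
  have hrep := existsUnique_lt_mk_smul_one_one_eq hodd p
  obtain ⟨s, hs⟩ := exists_addMonoidHom_mk_smul_one_one hodd p
  refine ⟨hrep, card_quotient_zmultiples_sup_YQn2 hodd p,
    (smul_one_one_mem_YQn2_iff hodd p _).mpr dvd_rfl, s, hs, fun x y hxy => ?_, fun x y hxy => ?_⟩
  all_goals
    obtain ⟨k, ⟨-, rfl⟩, -⟩ := hrep x
    rw [hs] at hxy
  · exact QuotientAddGroup.eq.mpr (AddSubgroup.mem_sup_right (QuotientAddGroup.eq.mp hxy.symm))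
  · rw [hs]
    simpa using mk_swap_eq_mk_swap hxy

/-- Assume `n` odd, and set `d = gcd(4𝐩+1, n)`,
`e_c = e_1 + e_2 = (1,1)`, `Y^{sc} = ℤ(e_1 - e_2) = ℤ·(1,-1)`.  Then the classes of
`k·e_c` for `0 ≤ k ≤ n/d - 1` form a complete set of representatives of
`Y/(Y^{sc} + Y_{Q,n})` (which therefore has order `n/d`); moreover
`(n/d)·e_c ∈ Y_{Q,n}`, so `k ↦ class of k·e_c` defines a group-homomorphic splitting `s`
of the natural surjection `Y/Y_{Q,n} ↠ Y/(Y^{sc} + Y_{Q,n})`, and since `e_c` is fixed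
by the coordinate swap this splitting is equivariant for the Weyl action (swap on
`Y/Y_{Q,n}`, trivial on `Y/(Y^{sc} + Y_{Q,n})`): each value of `s` is a swap-fixed
class. -/
theorem stmt18 (n : ℕ) (hn : 0 < n) (hodd : Odd n) (p : ℤ) :
    (∀ x : (ℤ × ℤ) ⧸ (AddSubgroup.zmultiples ((1, -1) : ℤ × ℤ) ⊔ YQn2 n p),
        ∃! k : ℕ, k < n / Int.gcd (4 * p + 1) (n : ℤ) ∧
          QuotientAddGroup.mk ((k : ℤ) • ((1, 1) : ℤ × ℤ)) = x) ∧
    Nat.card ((ℤ × ℤ) ⧸ (AddSubgroup.zmultiples ((1, -1) : ℤ × ℤ) ⊔ YQn2 n p))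
        = n / Int.gcd (4 * p + 1) (n : ℤ) ∧
    ((n / Int.gcd (4 * p + 1) (n : ℤ) : ℕ) : ℤ) • ((1, 1) : ℤ × ℤ) ∈ YQn2 n p ∧
    ∃ s : ((ℤ × ℤ) ⧸ (AddSubgroup.zmultiples ((1, -1) : ℤ × ℤ) ⊔ YQn2 n p)) →+
        ((ℤ × ℤ) ⧸ YQn2 n p),
      (∀ k : ℤ, s (QuotientAddGroup.mk (k • ((1, 1) : ℤ × ℤ)))
          = QuotientAddGroup.mk (k • ((1, 1) : ℤ × ℤ))) ∧
      (∀ (x : (ℤ × ℤ) ⧸ (AddSubgroup.zmultiples ((1, -1) : ℤ × ℤ) ⊔ YQn2 n p)) (y : ℤ × ℤ),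
          s x = QuotientAddGroup.mk y →
            (QuotientAddGroup.mk y :
              (ℤ × ℤ) ⧸ (AddSubgroup.zmultiples ((1, -1) : ℤ × ℤ) ⊔ YQn2 n p)) = x) ∧
      (∀ (x : (ℤ × ℤ) ⧸ (AddSubgroup.zmultiples ((1, -1) : ℤ × ℤ) ⊔ YQn2 n p)) (y : ℤ × ℤ),
          s x = QuotientAddGroup.mk y → s x = QuotientAddGroup.mk (Prod.swap y)) :=
  stmt18_general n hodd p
end
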